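/- arXiv:1409.3633 — 4 statements merged into one kernel-verified Lean document; each statement's English description precedes it below -/
import Mathlib

section
/- Let σ ∈ ℝ, δ > 0 and μ̂ = (μ, q) ∈ V^σ. Assume that the set Ŝ^σ_μ̂ ∩ (Γ × [q−δ, q+δ]) is compact, and set R_μ̂ = max{|λ| : (λ, p) ∈ Ŝ^σ_μ̂ ∩ (Γ × [q−δ, q+δ])} (with R_μ̂ = 0 if the set is empty). Then for every R > R_μ̂ for which the set S_R := {λ̂ = (λ,p) ∈ ∂Σ^σ : |λ| = R, |p − q| ≤ δ} is nonempty and compact, one has H_μ̂(R) := min_{λ̂ ∈ S_R} (μ̂ − λ̂)·ν̂_λ̂ > 0. -/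
open scoped BigOperators
open Set

noncomputable def fpart {n : ℕ} (f : EuclideanSpace ℝ (Fin n) → ℝ)
    (l : EuclideanSpace ℝ (Fin n)) (i : Fin n) : ℝ :=
  fderiv ℝ f l (EuclideanSpace.single i (1 : ℝ))

noncomputable def gradf {n : ℕ} (f : EuclideanSpace ℝ (Fin n) → ℝ)
    (l : EuclideanSpace ℝ (Fin n)) : EuclideanSpace ℝ (Fin n) :=
  WithLp.toLp 2 (fun i => fpart f l i)

/-- Unit normal to the level surface of `f` through `l`. -/
noncomputable def nuf {n : ℕ} (f : EuclideanSpace ℝ (Fin n) → ℝ)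
    (l : EuclideanSpace ℝ (Fin n)) : EuclideanSpace ℝ (Fin n) :=
  ‖gradf f l‖⁻¹ • gradf f l

/-- `(μ̂ - λ̂) ⬝ ν̂_λ̂` where `ν̂_λ̂ = (Df(λ), -1)/√(1+|Df(λ)|²)`. -/
noncomputable def dotNu {n : ℕ} (f : EuclideanSpace ℝ (Fin n) → ℝ)
    (mu lp : EuclideanSpace ℝ (Fin n) × ℝ) : ℝ :=
  (∑ i, fpart f lp.1 i * (mu.1 i - lp.1 i) - (mu.2 - lp.2)) /
    Real.sqrt (1 + ‖gradf f lp.1‖ ^ 2)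

/-- `Σ^σ = {(λ,p) ∈ Γ×ℝ : f(λ) - p > σ}`. -/
def SigmaGt {n : ℕ} (f : EuclideanSpace ℝ (Fin n) → ℝ)
    (Γ : Set (EuclideanSpace ℝ (Fin n))) (σ : ℝ) :
    Set (EuclideanSpace ℝ (Fin n) × ℝ) :=
  {lp | lp.1 ∈ Γ ∧ σ < f lp.1 - lp.2}

/-- `∂Σ^σ = {(λ,p) ∈ Γ×ℝ : f(λ) - p = σ}`. -/
def SigmaBd {n : ℕ} (f : EuclideanSpace ℝ (Fin n) → ℝ)
    (Γ : Set (EuclideanSpace ℝ (Fin n))) (σ : ℝ) :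
    Set (EuclideanSpace ℝ (Fin n) × ℝ) :=
  {lp | lp.1 ∈ Γ ∧ f lp.1 - lp.2 = σ}

/-- `Ŝ^σ_μ̂ = {λ̂ ∈ ∂Σ^σ : (μ̂ - λ̂)·ν̂_λ̂ ≤ 0}`. -/
def Shat {n : ℕ} (f : EuclideanSpace ℝ (Fin n) → ℝ)
    (Γ : Set (EuclideanSpace ℝ (Fin n))) (σ : ℝ)
    (mu : EuclideanSpace ℝ (Fin n) × ℝ) : Set (EuclideanSpace ℝ (Fin n) × ℝ) :=
  {lp | lp ∈ SigmaBd f Γ σ ∧ dotNu f mu lp ≤ 0}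

/-- `ℬ_σ⁺`. -/
def Bplus {n : ℕ} (f : EuclideanSpace ℝ (Fin n) → ℝ)
    (Γ : Set (EuclideanSpace ℝ (Fin n))) (σ : ℝ) :
    Set (EuclideanSpace ℝ (Fin n) × ℝ) :=
  {mu | mu.1 ∈ Γ ∧ ∀ a : ℝ, IsCompact (Shat f Γ σ mu ∩ Γ ×ˢ ({a} : Set ℝ))}

/-- `V^σ = ℬ_σ⁺ \ Σ^σ`. -/
def Vsig {n : ℕ} (f : EuclideanSpace ℝ (Fin n) → ℝ)
    (Γ : Set (EuclideanSpace ℝ (Fin n))) (σ : ℝ) :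
    Set (EuclideanSpace ℝ (Fin n) × ℝ) :=
  Bplus f Γ σ \ SigmaGt f Γ σ

/-- `ℬ_σ⁺(μ̂) = {tλ̂ + (1-t)μ̂ : λ̂ ∈ Ŝ^σ_μ̂, 0 ≤ t ≤ 1}`. -/
def BplusOf {n : ℕ} (f : EuclideanSpace ℝ (Fin n) → ℝ)
    (Γ : Set (EuclideanSpace ℝ (Fin n))) (σ : ℝ)
    (mu : EuclideanSpace ℝ (Fin n) × ℝ) : Set (EuclideanSpace ℝ (Fin n) × ℝ) :=
  {x | ∃ lp ∈ Shat f Γ σ mu, ∃ t ∈ Set.Icc (0:ℝ) 1, x = t • lp + (1 - t) • mu}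

/-- `f̃(λ,p) = f(λ) - p`. -/
def ftilde {n : ℕ} (f : EuclideanSpace ℝ (Fin n) → ℝ)
    (lp : EuclideanSpace ℝ (Fin n) × ℝ) : ℝ :=
  f lp.1 - lp.2

/-- `max_{0≤t≤1} f̃(tμ̂ + (1-t)λ̂)`. -/
noncomputable def segMax {n : ℕ} (f : EuclideanSpace ℝ (Fin n) → ℝ)
    (mu lp : EuclideanSpace ℝ (Fin n) × ℝ) : ℝ :=
  sSup ((fun t : ℝ => ftilde f (t • mu + (1 - t) • lp)) '' Set.Icc (0:ℝ) 1)

/-- `Θ_R(μ̂)`. -/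
noncomputable def Theta {n : ℕ} (f : EuclideanSpace ℝ (Fin n) → ℝ)
    (Γ : Set (EuclideanSpace ℝ (Fin n))) (σ δ : ℝ)
    (mu : EuclideanSpace ℝ (Fin n) × ℝ) (R : ℝ) : ℝ :=
  sInf ((fun lp => segMax f mu lp - σ) ''
    {lp | lp ∈ SigmaBd f Γ σ ∧ ‖lp.1‖ = R ∧ |lp.2 - mu.2| ≤ δ})

/-- `N_μ̂ = 2·max{|λ| : (λ,p) ∈ Ŝ^σ_μ̂ ∩ (Γ × [q-δ, q+δ])}` (as `sSup`). -/
noncomputable def NmuD {n : ℕ} (f : EuclideanSpace ℝ (Fin n) → ℝ)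
    (Γ : Set (EuclideanSpace ℝ (Fin n))) (σ δ : ℝ)
    (mu : EuclideanSpace ℝ (Fin n) × ℝ) : ℝ :=
  2 * sSup ((fun lp => ‖lp.1‖) ''
    (Shat f Γ σ mu ∩ Γ ×ˢ Set.Icc (mu.2 - δ) (mu.2 + δ)))

theorem stmt_4
    {n : ℕ} (hn : 2 ≤ n) (Γ : Set (EuclideanSpace ℝ (Fin n)))
    (hΓo : IsOpen Γ) (hΓcx : Convex ℝ Γ)
    (hΓcone : ∀ l ∈ Γ, ∀ t : ℝ, 0 < t → t • l ∈ Γ)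
    (hΓsym : ∀ (π : Equiv.Perm (Fin n)), ∀ l ∈ Γ,
      ((WithLp.toLp 2 (fun i => l (π i))) : EuclideanSpace ℝ (Fin n)) ∈ Γ)
    (hΓn : {l : EuclideanSpace ℝ (Fin n) | ∀ i, 0 < l i} ⊆ Γ)
    (f : EuclideanSpace ℝ (Fin n) → ℝ)
    (hfsm : ContDiffOn ℝ (⊤ : ℕ∞) f Γ)
    (hfsym : ∀ (π : Equiv.Perm (Fin n)), ∀ l ∈ Γ,
      f (WithLp.toLp 2 (fun i => l (π i))) = f l)
    (hfpos : ∀ l ∈ Γ, ∀ i, 0 < fpart f l i)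
    (hfcc : ConcaveOn ℝ Γ f)
    (σ δ : ℝ) (hδ : 0 < δ) (μ : EuclideanSpace ℝ (Fin n)) (q : ℝ)
    (hμ : (μ, q) ∈ Vsig f Γ σ)
    (hcpt : IsCompact (Shat f Γ σ (μ, q) ∩ Γ ×ˢ Set.Icc (q - δ) (q + δ))) :
    ∀ R : ℝ,
      sSup ((fun lp => ‖lp.1‖) ''
        (Shat f Γ σ (μ, q) ∩ Γ ×ˢ Set.Icc (q - δ) (q + δ))) < R →
      {lp | lp ∈ SigmaBd f Γ σ ∧ ‖lp.1‖ = R ∧ |lp.2 - q| ≤ δ}.Nonempty →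
      IsCompact {lp | lp ∈ SigmaBd f Γ σ ∧ ‖lp.1‖ = R ∧ |lp.2 - q| ≤ δ} →
      0 < sInf ((fun lp => dotNu f (μ, q) lp) ''
        {lp | lp ∈ SigmaBd f Γ σ ∧ ‖lp.1‖ = R ∧ |lp.2 - q| ≤ δ}) := by
  intro R hR hSne hScpt
  set S := {lp : EuclideanSpace ℝ (Fin n) × ℝ |
    lp ∈ SigmaBd f Γ σ ∧ ‖lp.1‖ = R ∧ |lp.2 - q| ≤ δ} with hSdef
  -- continuity of fderiv on Γ
  have hfd : ContinuousOn (fderiv ℝ f) Γ :=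
    hfsm.continuousOn_fderiv_of_isOpen hΓo (by simp)
  have hfpart : ∀ i : Fin n,
      ContinuousOn (fun lp : EuclideanSpace ℝ (Fin n) × ℝ => fpart f lp.1 i)
        {lp : EuclideanSpace ℝ (Fin n) × ℝ | lp.1 ∈ Γ} := by
    intro i
    have h1 : ContinuousOn (fun l => fderiv ℝ f l (EuclideanSpace.single i (1:ℝ))) Γ :=
      (ContinuousLinearMap.apply ℝ ℝ
        (EuclideanSpace.single i (1:ℝ))).continuous.comp_continuousOn hfd
    exact h1.comp continuousOn_fst (fun lp hlp => hlp)
  have hnorm : ∀ l : EuclideanSpace ℝ (Fin n),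
      ‖gradf f l‖ ^ 2 = ∑ i, (fpart f l i) ^ 2 := by
    intro l
    rw [EuclideanSpace.norm_eq, Real.sq_sqrt (by positivity)]
    simp [gradf, Real.norm_eq_abs, sq_abs]
  -- continuity of dotNu on Γ × ℝ
  have hcontOn : ContinuousOn (fun lp => dotNu f (μ, q) lp)
      {lp : EuclideanSpace ℝ (Fin n) × ℝ | lp.1 ∈ Γ} := by
    have hnum : ContinuousOn
        (fun lp : EuclideanSpace ℝ (Fin n) × ℝ =>
          ∑ i, fpart f lp.1 i * (μ i - lp.1 i) - (q - lp.2))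
        {lp : EuclideanSpace ℝ (Fin n) × ℝ | lp.1 ∈ Γ} := by
      apply ContinuousOn.sub
      · apply continuousOn_finset_sum
        intro i _
        exact (hfpart i).mul
          ((continuous_const.sub
            ((EuclideanSpace.proj i).continuous.comp continuous_fst)).continuousOn)
      · exact (continuous_const.sub continuous_snd).continuousOn
    have hden : ContinuousOn
        (fun lp : EuclideanSpace ℝ (Fin n) × ℝ =>
          Real.sqrt (1 + ∑ i, (fpart f lp.1 i) ^ 2))
        {lp : EuclideanSpace ℝ (Fin n) × ℝ | lp.1 ∈ Γ} := by
      apply Real.continuous_sqrt.comp_continuousOn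
      exact continuousOn_const.add
        (continuousOn_finset_sum _ (fun i _ => (hfpart i).pow 2))
    have hne : ∀ lp : EuclideanSpace ℝ (Fin n) × ℝ,
        lp ∈ {lp : EuclideanSpace ℝ (Fin n) × ℝ | lp.1 ∈ Γ} →
        Real.sqrt (1 + ∑ i, (fpart f lp.1 i) ^ 2) ≠ 0 := by
      intro lp _
      have : (0:ℝ) < 1 + ∑ i, (fpart f lp.1 i) ^ 2 := by positivity
      exact ne_of_gt (Real.sqrt_pos.mpr this)
    refine (hnum.div hden hne).congr ?_
    intro lp _
    simp only [dotNu, hnorm lp.1, Pi.div_apply]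
  have hSsub : S ⊆ {lp : EuclideanSpace ℝ (Fin n) × ℝ | lp.1 ∈ Γ} :=
    fun lp hlp => hlp.1.1
  -- pointwise positivity on S
  have hpos : ∀ lp ∈ S, 0 < dotNu f (μ, q) lp := by
    intro lp hlp
    by_contra hle
    push_neg at hle
    have hmem : lp ∈ Shat f Γ σ (μ, q) ∩ Γ ×ˢ Set.Icc (q - δ) (q + δ) := by
      refine ⟨⟨hlp.1, hle⟩, hlp.1.1, ?_⟩
      have := abs_le.mp hlp.2.2
      constructor <;> linarith [this.1, this.2]
    have hbdd : BddAbove ((fun lp => ‖lp.1‖) ''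
        (Shat f Γ σ (μ, q) ∩ Γ ×ˢ Set.Icc (q - δ) (q + δ))) := by
      have : IsCompact ((fun lp : EuclideanSpace ℝ (Fin n) × ℝ => ‖lp.1‖) ''
          (Shat f Γ σ (μ, q) ∩ Γ ×ˢ Set.Icc (q - δ) (q + δ))) :=
        hcpt.image (continuous_norm.comp continuous_fst)
      exact this.bddAbove
    have hle' : ‖lp.1‖ ≤ sSup ((fun lp => ‖lp.1‖) ''
        (Shat f Γ σ (μ, q) ∩ Γ ×ˢ Set.Icc (q - δ) (q + δ))) :=
      le_csSup hbdd ⟨lp, hmem, rfl⟩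
    rw [hlp.2.1] at hle'
    linarith
  -- conclude via compactness
  have hKimg : IsCompact ((fun lp => dotNu f (μ, q) lp) '' S) :=
    hScpt.image_of_continuousOn (hcontOn.mono hSsub)
  have hneimg : ((fun lp => dotNu f (μ, q) lp) '' S).Nonempty :=
    hSne.image _
  obtain ⟨lp, hlp, heq⟩ := hKimg.sInf_mem hneimg
  rw [← heq]
  exact hpos lp hlp
end

section
/- Let σ ∈ ℝ and μ̂ ∈ V^σ. Then ℬ_σ⁺(μ̂) ⊆ V^σ, and for every μ̂′ ∈ ℬ_σ⁺(μ̂) one has ℬ_σ⁺(μ̂′) ⊆ ℬ_σ⁺(μ̂). -/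
open scoped BigOperators
open Set

open Set Filter Topology

section Aux
variable {n : ℕ} {Γ : Set (EuclideanSpace ℝ (Fin n))} {f : EuclideanSpace ℝ (Fin n) → ℝ}

lemma slope_le_aux {φ : ℝ → ℝ} {d c b : ℝ} (hd : HasDerivAt φ d b)
    (h : ∀ᶠ ε in 𝓝[>] b, φ ε ≤ φ b + (ε - b) * c) : d ≤ c := by
  have ht : Tendsto (slope φ b) (𝓝[>] b) (𝓝 d) :=
    (hasDerivAt_iff_tendsto_slope.1 hd).mono_left
      (nhdsWithin_mono _ (fun y hy => ne_of_gt hy))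
  refine le_of_tendsto ht ?_
  filter_upwards [h, self_mem_nhdsWithin] with ε hε hεb
  have hpos : 0 < ε - b := sub_pos.2 hεb
  rw [slope_def_field, div_le_iff₀ hpos]
  nlinarith

lemma slope_ge_aux {φ : ℝ → ℝ} {d c b : ℝ} (hd : HasDerivAt φ d b)
    (h : ∀ᶠ ε in 𝓝[>] b, φ b + (ε - b) * c ≤ φ ε) : c ≤ d := by
  have ht : Tendsto (slope φ b) (𝓝[>] b) (𝓝 d) :=
    (hasDerivAt_iff_tendsto_slope.1 hd).mono_left
      (nhdsWithin_mono _ (fun y hy => ne_of_gt hy))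
  refine ge_of_tendsto ht ?_
  filter_upwards [h, self_mem_nhdsWithin] with ε hε hεb
  have hpos : 0 < ε - b := sub_pos.2 hεb
  rw [slope_def_field, le_div_iff₀ hpos]
  nlinarith

lemma slope_left_nonneg {φ : ℝ → ℝ} {d b : ℝ} (hd : HasDerivAt φ d b)
    (h : ∀ᶠ r in 𝓝[<] b, φ r ≤ φ b) : 0 ≤ d := by
  have ht : Tendsto (slope φ b) (𝓝[<] b) (𝓝 d) :=
    (hasDerivAt_iff_tendsto_slope.1 hd).mono_left
      (nhdsWithin_mono _ (fun y hy => ne_of_lt hy))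
  refine ge_of_tendsto ht ?_
  filter_upwards [h, self_mem_nhdsWithin] with r hr hrb
  have hneg : r - b < 0 := sub_neg.2 hrb
  rw [slope_def_field, le_div_iff_of_neg hneg]
  nlinarith

lemma diffAt (hΓo : IsOpen Γ) (hfsm : ContDiffOn ℝ (⊤ : ℕ∞) f Γ) {x} (hx : x ∈ Γ) :
    DifferentiableAt ℝ f x :=
  (hfsm.contDiffAt (hΓo.mem_nhds hx)).differentiableAt (by simp)

lemma line_hasDerivAt (hΓo : IsOpen Γ) (hfsm : ContDiffOn ℝ (⊤ : ℕ∞) f Γ)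
    (a w : EuclideanSpace ℝ (Fin n)) (r₀ : ℝ) (h : a + r₀ • w ∈ Γ) :
    HasDerivAt (fun r : ℝ => f (a + r • w)) (fderiv ℝ f (a + r₀ • w) w) r₀ := by
  have hF := (diffAt hΓo hfsm h).hasFDerivAt
  have hcurve : HasDerivAt (fun r : ℝ => a + r • w) w r₀ := by
    simpa using ((hasDerivAt_id r₀).smul_const w).const_add a
  exact hF.comp_hasDerivAt r₀ hcurve

lemma tangent_bound (hΓo : IsOpen Γ) (hfsm : ContDiffOn ℝ (⊤ : ℕ∞) f Γ)
    (hfcc : ConcaveOn ℝ Γ f) {x y} (hx : x ∈ Γ) (hy : y ∈ Γ) :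
    f y ≤ f x + fderiv ℝ f x (y - x) := by
  have hline : HasDerivAt (fun s : ℝ => f (x + s • (y - x))) (fderiv ℝ f x (y - x)) 0 := by
    have := line_hasDerivAt hΓo hfsm x (y - x) 0 (by simpa using hx)
    simpa using this
  have key : f y - f x ≤ fderiv ℝ f x (y - x) := by
    refine slope_ge_aux hline ?_
    filter_upwards [Ioc_mem_nhdsGT_of_mem (Set.left_mem_Ico.2 zero_lt_one)] with s hs
    have hcomb := hfcc.2 hx hy (by linarith [hs.2] : (0:ℝ) ≤ 1 - s) (le_of_lt hs.1) (by ring)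
    have hpt : (1 - s) • x + s • y = x + s • (y - x) := by module
    rw [hpt] at hcomb
    simp only [smul_eq_mul] at hcomb
    simp only [zero_smul, add_zero, sub_zero]
    nlinarith [hcomb]
  linarith

/-- numerator of `dotNu`, in `fderiv` form -/
noncomputable def Dn (f : EuclideanSpace ℝ (Fin n) → ℝ)
    (mu lp : EuclideanSpace ℝ (Fin n) × ℝ) : ℝ :=
  fderiv ℝ f lp.1 (mu.1 - lp.1) - (mu.2 - lp.2)

lemma sum_fpart (f : EuclideanSpace ℝ (Fin n) → ℝ) (x w : EuclideanSpace ℝ (Fin n)) :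
    ∑ i, fpart f x i * w i = fderiv ℝ f x w := by
  have hw : w = ∑ i, w i • EuclideanSpace.single i (1:ℝ) := by
    have := (EuclideanSpace.basisFun (Fin n) ℝ).sum_repr w
    simp only [EuclideanSpace.basisFun_apply, EuclideanSpace.basisFun_repr] at this
    exact this.symm
  conv_rhs => rw [hw]
  rw [map_sum]
  simp [fpart, mul_comm]

lemma dotNu_nonpos_iff (f : EuclideanSpace ℝ (Fin n) → ℝ)
    (mu lp : EuclideanSpace ℝ (Fin n) × ℝ) :
    dotNu f mu lp ≤ 0 ↔ Dn f mu lp ≤ 0 := by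
  have hnum : (∑ i, fpart f lp.1 i * (mu.1 i - lp.1 i)) = fderiv ℝ f lp.1 (mu.1 - lp.1) := by
    rw [← sum_fpart f lp.1 (mu.1 - lp.1)]
    congr 1
  have hd : 0 < Real.sqrt (1 + ‖gradf f lp.1‖ ^ 2) :=
    Real.sqrt_pos.2 (by positivity)
  rw [dotNu, div_nonpos_iff]
  constructor
  · rintro (⟨h1, h2⟩ | ⟨h1, h2⟩)
    · linarith
    · rw [Dn, ← hnum]; exact h1
  · intro h
    right
    exact ⟨by rw [Dn, ← hnum] at h; exact h, hd.le⟩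

lemma Dn_combo (f : EuclideanSpace ℝ (Fin n) → ℝ) (a b lp : EuclideanSpace ℝ (Fin n) × ℝ)
    (t : ℝ) : Dn f (t • a + (1 - t) • b) lp = t * Dn f a lp + (1 - t) * Dn f b lp := by
  have h1 : (t • a + (1 - t) • b).1 - lp.1 = t • (a.1 - lp.1) + (1 - t) • (b.1 - lp.1) := by
    simp only [Prod.fst_add, Prod.smul_fst]
    module
  have h2 : (t • a + (1 - t) • b).2 = t * a.2 + (1 - t) * b.2 := by
    simp only [Prod.snd_add, Prod.smul_snd, smul_eq_mul]
  rw [Dn, h1, h2, map_add, map_smul, map_smul]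
  simp only [smul_eq_mul, Dn]
  ring

lemma tangent_Dn (hΓo : IsOpen Γ) (hfsm : ContDiffOn ℝ (⊤ : ℕ∞) f Γ)
    (hfcc : ConcaveOn ℝ Γ f) {lp nu : EuclideanSpace ℝ (Fin n) × ℝ}
    (hlp : lp.1 ∈ Γ) (hnu : nu.1 ∈ Γ) :
    f nu.1 - nu.2 ≤ (f lp.1 - lp.2) + Dn f nu lp := by
  have := tangent_bound hΓo hfsm hfcc hlp hnu
  rw [Dn]; linarith

end Aux
section Key
variable {n : ℕ} {Γ : Set (EuclideanSpace ℝ (Fin n))} {f : EuclideanSpace ℝ (Fin n) → ℝ}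

lemma key_subset (hΓo : IsOpen Γ) (hΓcx : Convex ℝ Γ) (hfsm : ContDiffOn ℝ (⊤ : ℕ∞) f Γ)
    (hfcc : ConcaveOn ℝ Γ f) {σ : ℝ} {mu l0 : EuclideanSpace ℝ (Fin n) × ℝ}
    (hmuΓ : mu.1 ∈ Γ) (hl0 : l0 ∈ Shat f Γ σ mu) {t : ℝ} (ht : t ∈ Set.Icc (0:ℝ) 1) :
    Shat f Γ σ (t • l0 + (1 - t) • mu) ⊆ Shat f Γ σ mu := by
  obtain ⟨⟨hl0Γ, hl0σ⟩, hl0dot⟩ := hl0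
  have hDl0mu : Dn f mu l0 ≤ 0 := (dotNu_nonpos_iff f mu l0).1 hl0dot
  rintro A ⟨⟨hAΓ, hAσ⟩, hAdot⟩
  refine ⟨⟨hAΓ, hAσ⟩, (dotNu_nonpos_iff f mu A).2 ?_⟩
  have hcombo : t * Dn f l0 A + (1 - t) * Dn f mu A ≤ 0 := by
    rw [← Dn_combo]
    exact (dotNu_nonpos_iff f _ A).1 hAdot
  have hDl0A : 0 ≤ Dn f l0 A := by
    have := tangent_Dn hΓo hfsm hfcc hAΓ hl0Γ
    rw [hAσ, hl0σ] at this; linarith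
  rcases lt_or_eq_of_le ht.2 with htlt | hteq
  · nlinarith [ht.1]
  -- t = 1 case
  subst hteq
  have hDl0A' : Dn f l0 A = 0 := le_antisymm (by nlinarith) hDl0A
  -- Dn f A l0 = 0
  have hDAl0 : Dn f A l0 = 0 := by
    set g : ℝ → ℝ := fun s => f (A.1 + s • (l0.1 - A.1)) - (A.2 + s * (l0.2 - A.2)) with hg
    have hgconst : ∀ s ∈ Set.Icc (0:ℝ) 1, g s = σ := by
      intro s hs
      have hptΓ : A.1 + s • (l0.1 - A.1) ∈ Γ := by
        have h : (1 - s) • A.1 + s • l0.1 = A.1 + s • (l0.1 - A.1) := by module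
        rw [← h]
        exact hΓcx hAΓ hl0Γ (by linarith [hs.2]) hs.1 (by ring)
      have hle : g s ≤ σ := by
        have htan := tangent_bound hΓo hfsm hfcc hAΓ hptΓ
        have hv : (A.1 + s • (l0.1 - A.1)) - A.1 = s • (l0.1 - A.1) := by module
        rw [hv, map_smul, smul_eq_mul] at htan
        have hDn : fderiv ℝ f A.1 (l0.1 - A.1) = Dn f l0 A + (l0.2 - A.2) := by
          rw [Dn]; ring
        rw [hDn, hDl0A'] at htan
        simp only [hg]
        nlinarith [htan, hAσ]
      have hge : σ ≤ g s := by
        have hcomb := hfcc.2 hAΓ hl0Γ (by linarith [hs.2] : (0:ℝ) ≤ 1 - s) hs.1 (by ring)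
        have h : (1 - s) • A.1 + s • l0.1 = A.1 + s • (l0.1 - A.1) := by module
        rw [h] at hcomb
        simp only [smul_eq_mul] at hcomb
        have e : (1 - s) * (f A.1 - A.2) + s * (f l0.1 - l0.2) = σ := by
          rw [hAσ, hl0σ]; ring
        simp only [hg]
        nlinarith [hcomb, e]
      linarith
    have hgd : HasDerivAt g (fderiv ℝ f l0.1 (l0.1 - A.1) - (l0.2 - A.2)) 1 := by
      have hmem : A.1 + (1:ℝ) • (l0.1 - A.1) ∈ Γ := by
        have h : A.1 + (1:ℝ) • (l0.1 - A.1) = l0.1 := by module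
        rw [h]; exact hl0Γ
      have h1 := line_hasDerivAt hΓo hfsm A.1 (l0.1 - A.1) 1 hmem
      have h2 : HasDerivAt (fun s : ℝ => A.2 + s * (l0.2 - A.2)) (l0.2 - A.2) 1 := by
        simpa using ((hasDerivAt_id (1:ℝ)).mul_const (l0.2 - A.2)).const_add A.2
      have heq : A.1 + (1:ℝ) • (l0.1 - A.1) = l0.1 := by module
      rw [heq] at h1
      exact h1.sub h2
    have hu : UniqueDiffWithinAt ℝ (Set.Icc (0:ℝ) 1) 1 :=
      uniqueDiffOn_Icc zero_lt_one 1 (Set.right_mem_Icc.2 zero_le_one)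
    have hd1 : derivWithin g (Set.Icc (0:ℝ) 1) 1 = fderiv ℝ f l0.1 (l0.1 - A.1) - (l0.2 - A.2) :=
      (hgd.hasDerivWithinAt).derivWithin hu
    have hd2 : derivWithin g (Set.Icc (0:ℝ) 1) 1 = 0 := by
      have hconst : HasDerivWithinAt g 0 (Set.Icc (0:ℝ) 1) 1 := by
        refine (hasDerivWithinAt_const 1 _ σ).congr hgconst ?_
        exact hgconst 1 (Set.right_mem_Icc.2 zero_le_one)
      exact hconst.derivWithin hu
    have hzero : fderiv ℝ f l0.1 (l0.1 - A.1) - (l0.2 - A.2) = 0 := hd1.symm.trans hd2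
    have hneg : fderiv ℝ f l0.1 (A.1 - l0.1) = -(fderiv ℝ f l0.1 (l0.1 - A.1)) := by
      rw [← map_neg]; congr 1; module
    rw [Dn, hneg]
    linarith
  -- slope argument at A in direction mu
  set φ : ℝ → ℝ := fun ε => f (A.1 + ε • (mu.1 - A.1)) - (A.2 + ε * (mu.2 - A.2)) with hφ
  have hφd : HasDerivAt φ (Dn f mu A) 0 := by
    have hmem : A.1 + (0:ℝ) • (mu.1 - A.1) ∈ Γ := by
      have h : A.1 + (0:ℝ) • (mu.1 - A.1) = A.1 := by module
      rw [h]; exact hAΓ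
    have h1 := line_hasDerivAt hΓo hfsm A.1 (mu.1 - A.1) 0 hmem
    have h2 : HasDerivAt (fun ε : ℝ => A.2 + ε * (mu.2 - A.2)) (mu.2 - A.2) 0 := by
      simpa using ((hasDerivAt_id (0:ℝ)).mul_const (mu.2 - A.2)).const_add A.2
    have heq : A.1 + (0:ℝ) • (mu.1 - A.1) = A.1 := by module
    rw [heq] at h1
    exact h1.sub h2
  have hφ0 : φ 0 = σ := by
    simp only [hφ, zero_smul, add_zero, zero_mul]
    exact hAσ
  have hev : ∀ᶠ ε in nhdsWithin (0:ℝ) (Set.Ioi 0), φ ε ≤ φ 0 + (ε - 0) * Dn f mu l0 := by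
    have hcont : Continuous (fun ε : ℝ => A.1 + ε • (mu.1 - A.1)) :=
      continuous_const.add (continuous_id.smul continuous_const)
    have hevΓ : ∀ᶠ ε in nhds (0:ℝ), A.1 + ε • (mu.1 - A.1) ∈ Γ := by
      have h0 : A.1 + (0:ℝ) • (mu.1 - A.1) ∈ Γ := by
        have h : A.1 + (0:ℝ) • (mu.1 - A.1) = A.1 := by module
        rw [h]; exact hAΓ
      exact hcont.continuousAt.eventually_mem (hΓo.mem_nhds h0)
    filter_upwards [nhdsWithin_le_nhds hevΓ] with ε hptΓ
    have htan := tangent_bound hΓo hfsm hfcc hl0Γ hptΓ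
    have hvec : (A.1 + ε • (mu.1 - A.1)) - l0.1
        = (A.1 - l0.1) + ε • ((mu.1 - l0.1) - (A.1 - l0.1)) := by module
    rw [hvec, map_add, map_smul, smul_eq_mul,
      map_sub (fderiv ℝ f l0.1) (mu.1 - l0.1) (A.1 - l0.1)] at htan
    have hX : fderiv ℝ f l0.1 (A.1 - l0.1) = A.2 - l0.2 := by
      have h := hDAl0; rw [Dn] at h; linarith
    have hY : fderiv ℝ f l0.1 (mu.1 - l0.1) = Dn f mu l0 + (mu.2 - l0.2) := by
      rw [Dn]; ring
    rw [hX, hY] at htan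
    rw [hφ0]
    simp only [hφ]
    nlinarith [htan, hl0σ]
  have := slope_le_aux hφd hev
  linarith
end Key
section Cpt
variable {n : ℕ} {Γ : Set (EuclideanSpace ℝ (Fin n))} {f : EuclideanSpace ℝ (Fin n) → ℝ}

lemma Dn_self (f : EuclideanSpace ℝ (Fin n) → ℝ) (lp : EuclideanSpace ℝ (Fin n) × ℝ) :
    Dn f lp lp = 0 := by
  simp [Dn]

lemma mem_of_BplusOf (hΓo : IsOpen Γ) (hΓcx : Convex ℝ Γ) (hfsm : ContDiffOn ℝ (⊤ : ℕ∞) f Γ)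
    (hfcc : ConcaveOn ℝ Γ f) {σ : ℝ} {mu x : EuclideanSpace ℝ (Fin n) × ℝ}
    (hmuΓ : mu.1 ∈ Γ) (hmuf : f mu.1 - mu.2 ≤ σ) (hx : x ∈ BplusOf f Γ σ mu) :
    x.1 ∈ Γ ∧ f x.1 - x.2 ≤ σ := by
  obtain ⟨lp, hlp, t, ht, hxe⟩ := hx
  obtain ⟨⟨hlpΓ, hlpσ⟩, hlpdot⟩ := hlp
  have hx1 : x.1 = t • lp.1 + (1 - t) • mu.1 := by rw [hxe]; rfl
  have hxΓ : x.1 ∈ Γ := by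
    rw [hx1]; exact hΓcx hlpΓ hmuΓ ht.1 (by linarith [ht.2]) (by ring)
  refine ⟨hxΓ, ?_⟩
  have htan := tangent_Dn hΓo hfsm hfcc hlpΓ hxΓ
  have hDx : Dn f x lp = t * Dn f lp lp + (1 - t) * Dn f mu lp := by
    rw [hxe]; exact Dn_combo f lp mu lp t
  have hDmu : Dn f mu lp ≤ 0 := (dotNu_nonpos_iff f mu lp).1 hlpdot
  rw [hDx, Dn_self] at htan
  nlinarith [ht.2, htan, hlpσ, hDmu]

lemma slice_compact_of_subset (hΓo : IsOpen Γ) (hfsm : ContDiffOn ℝ (⊤ : ℕ∞) f Γ)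
    {σ : ℝ} {mu mu' : EuclideanSpace ℝ (Fin n) × ℝ}
    (hsub : Shat f Γ σ mu' ⊆ Shat f Γ σ mu)
    (hcomp : ∀ a : ℝ, IsCompact (Shat f Γ σ mu ∩ Γ ×ˢ ({a} : Set ℝ)))
    (a : ℝ) : IsCompact (Shat f Γ σ mu' ∩ Γ ×ˢ ({a} : Set ℝ)) := by
  set S' := Shat f Γ σ mu' ∩ Γ ×ˢ ({a} : Set ℝ) with hS'
  set K := Shat f Γ σ mu ∩ Γ ×ˢ ({a} : Set ℝ) with hK
  have hsub' : S' ⊆ K := Set.inter_subset_inter hsub subset_rfl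
  have hfd : ContinuousOn (fderiv ℝ f) Γ :=
    hfsm.continuousOn_fderiv_of_isOpen hΓo (by simp)
  have hclosed : IsClosed S' := by
    refine isClosed_of_closure_subset ?_
    intro x hxc
    have hxK : x ∈ K := ((hcomp a).isClosed.closure_subset) (closure_mono hsub' hxc)
    obtain ⟨⟨⟨hxΓ, hxσ⟩, -⟩, hxmem⟩ := hxK
    set F : EuclideanSpace ℝ (Fin n) × ℝ → ℝ :=
      fun lp => fderiv ℝ f lp.1 (mu'.1 - lp.1) - (mu'.2 - lp.2) with hF
    have h1 : ContinuousAt (fun lp : EuclideanSpace ℝ (Fin n) × ℝ => fderiv ℝ f lp.1) x :=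
      (hfd.continuousAt (hΓo.mem_nhds hxΓ)).comp continuousAt_fst
    have h2 : ContinuousAt (fun lp : EuclideanSpace ℝ (Fin n) × ℝ => mu'.1 - lp.1) x :=
      (continuous_const.sub continuous_fst).continuousAt
    have h3 : ContinuousAt
        (fun lp : EuclideanSpace ℝ (Fin n) × ℝ => fderiv ℝ f lp.1 (mu'.1 - lp.1)) x :=
      h1.clm_apply h2
    have h4 : ContinuousAt F x :=
      h3.sub (continuous_const.sub continuous_snd).continuousAt
    have himg : F x ∈ closure (F '' S') := mem_closure_image h4 hxc
    have hsubI : F '' S' ⊆ Set.Iic (0:ℝ) := by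
      rintro y ⟨lp, hlp, rfl⟩
      exact (dotNu_nonpos_iff f mu' lp).1 hlp.1.2
    have hDn : F x ≤ 0 := by
      have := (closure_mono hsubI) himg
      rwa [closure_Iic] at this
    exact ⟨⟨⟨hxΓ, hxσ⟩, (dotNu_nonpos_iff f mu' x).2 hDn⟩, hxmem⟩
  exact (hcomp a).of_isClosed_subset hclosed hsub'
end Cpt
section Chord
variable {n : ℕ} {Γ : Set (EuclideanSpace ℝ (Fin n))} {f : EuclideanSpace ℝ (Fin n) → ℝ}

/-- If `f̃` is constant `σ` on the segment from `A` to `B`, the directional derivative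
at the endpoint `B` vanishes, i.e. `Dn f A B = 0`. -/
lemma Dn_of_seg_const (hΓo : IsOpen Γ) (hfsm : ContDiffOn ℝ (⊤ : ℕ∞) f Γ) {σ : ℝ}
    {A B : EuclideanSpace ℝ (Fin n) × ℝ} (hBΓ : B.1 ∈ Γ)
    (hconst : ∀ s ∈ Set.Icc (0:ℝ) 1,
      f (A.1 + s • (B.1 - A.1)) - (A.2 + s * (B.2 - A.2)) = σ) :
    Dn f A B = 0 := by
  set g : ℝ → ℝ := fun s => f (A.1 + s • (B.1 - A.1)) - (A.2 + s * (B.2 - A.2)) with hg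
  have hgd : HasDerivAt g (fderiv ℝ f B.1 (B.1 - A.1) - (B.2 - A.2)) 1 := by
    have heq : A.1 + (1:ℝ) • (B.1 - A.1) = B.1 := by module
    have hmem : A.1 + (1:ℝ) • (B.1 - A.1) ∈ Γ := by rw [heq]; exact hBΓ
    have h1 := line_hasDerivAt hΓo hfsm A.1 (B.1 - A.1) 1 hmem
    have h2 : HasDerivAt (fun s : ℝ => A.2 + s * (B.2 - A.2)) (B.2 - A.2) 1 := by
      simpa using ((hasDerivAt_id (1:ℝ)).mul_const (B.2 - A.2)).const_add A.2
    rw [heq] at h1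
    exact h1.sub h2
  have hu : UniqueDiffWithinAt ℝ (Set.Icc (0:ℝ) 1) 1 :=
    uniqueDiffOn_Icc zero_lt_one 1 (Set.right_mem_Icc.2 zero_le_one)
  have hd1 : derivWithin g (Set.Icc (0:ℝ) 1) 1 = fderiv ℝ f B.1 (B.1 - A.1) - (B.2 - A.2) :=
    (hgd.hasDerivWithinAt).derivWithin hu
  have hd2 : derivWithin g (Set.Icc (0:ℝ) 1) 1 = 0 := by
    have hconst' : HasDerivWithinAt g 0 (Set.Icc (0:ℝ) 1) 1 := by
      refine (hasDerivWithinAt_const 1 _ σ).congr hconst ?_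
      exact hconst 1 (Set.right_mem_Icc.2 zero_le_one)
    exact hconst'.derivWithin hu
  have hzero : fderiv ℝ f B.1 (B.1 - A.1) - (B.2 - A.2) = 0 := hd1.symm.trans hd2
  have hneg : fderiv ℝ f B.1 (A.1 - B.1) = -(fderiv ℝ f B.1 (B.1 - A.1)) := by
    rw [← map_neg]; congr 1; module
  rw [Dn, hneg]; linarith

/-- slope comparison: if the tangent plane at `l0` touches at `A` (`Dn f A l0 = 0`),
then `Dn f mu A ≤ Dn f mu l0`. -/
lemma Dn_le_of_touch (hΓo : IsOpen Γ) (hfsm : ContDiffOn ℝ (⊤ : ℕ∞) f Γ)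
    (hfcc : ConcaveOn ℝ Γ f) {σ : ℝ} {A l0 mu : EuclideanSpace ℝ (Fin n) × ℝ}
    (hAΓ : A.1 ∈ Γ) (hl0Γ : l0.1 ∈ Γ) (hAσ : f A.1 - A.2 = σ) (hl0σ : f l0.1 - l0.2 = σ)
    (hflat : Dn f A l0 = 0) : Dn f mu A ≤ Dn f mu l0 := by
  set φ : ℝ → ℝ := fun ε => f (A.1 + ε • (mu.1 - A.1)) - (A.2 + ε * (mu.2 - A.2)) with hφ
  have hφd : HasDerivAt φ (Dn f mu A) 0 := by
    have heq : A.1 + (0:ℝ) • (mu.1 - A.1) = A.1 := by module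
    have hmem : A.1 + (0:ℝ) • (mu.1 - A.1) ∈ Γ := by rw [heq]; exact hAΓ
    have h1 := line_hasDerivAt hΓo hfsm A.1 (mu.1 - A.1) 0 hmem
    have h2 : HasDerivAt (fun ε : ℝ => A.2 + ε * (mu.2 - A.2)) (mu.2 - A.2) 0 := by
      simpa using ((hasDerivAt_id (0:ℝ)).mul_const (mu.2 - A.2)).const_add A.2
    rw [heq] at h1
    exact h1.sub h2
  have hφ0 : φ 0 = σ := by
    simp only [hφ, zero_smul, add_zero, zero_mul]
    exact hAσ
  have hev : ∀ᶠ ε in nhdsWithin (0:ℝ) (Set.Ioi 0), φ ε ≤ φ 0 + (ε - 0) * Dn f mu l0 := by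
    have hcont : Continuous (fun ε : ℝ => A.1 + ε • (mu.1 - A.1)) :=
      continuous_const.add (continuous_id.smul continuous_const)
    have hevΓ : ∀ᶠ ε in nhds (0:ℝ), A.1 + ε • (mu.1 - A.1) ∈ Γ := by
      have heq : A.1 + (0:ℝ) • (mu.1 - A.1) = A.1 := by module
      have h0 : A.1 + (0:ℝ) • (mu.1 - A.1) ∈ Γ := by rw [heq]; exact hAΓ
      exact hcont.continuousAt.eventually_mem (hΓo.mem_nhds h0)
    filter_upwards [nhdsWithin_le_nhds hevΓ] with ε hptΓ
    have htan := tangent_bound hΓo hfsm hfcc hl0Γ hptΓ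
    have hvec : (A.1 + ε • (mu.1 - A.1)) - l0.1
        = (A.1 - l0.1) + ε • ((mu.1 - l0.1) - (A.1 - l0.1)) := by module
    rw [hvec, map_add, map_smul, smul_eq_mul,
      map_sub (fderiv ℝ f l0.1) (mu.1 - l0.1) (A.1 - l0.1)] at htan
    have hX : fderiv ℝ f l0.1 (A.1 - l0.1) = A.2 - l0.2 := by
      have h := hflat; rw [Dn] at h; linarith
    have hY : fderiv ℝ f l0.1 (mu.1 - l0.1) = Dn f mu l0 + (mu.2 - l0.2) := by
      rw [Dn]; ring
    rw [hX, hY] at htan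
    rw [hφ0]
    simp only [hφ]
    nlinarith [htan, hl0σ]
  exact slope_le_aux hφd hev

set_option maxHeartbeats 1000000 in
/-- A point of `∂Σ^σ` on a chord between two points of `Ŝ^σ_μ̂` lies in `Ŝ^σ_μ̂`. -/
lemma shat_chord (hΓo : IsOpen Γ) (hΓcx : Convex ℝ Γ) (hfsm : ContDiffOn ℝ (⊤ : ℕ∞) f Γ)
    (hfcc : ConcaveOn ℝ Γ f) {σ : ℝ} {mu C l0 : EuclideanSpace ℝ (Fin n) × ℝ}
    (hC : C ∈ Shat f Γ σ mu) (hl0 : l0 ∈ Shat f Γ σ mu)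
    {α β : ℝ} (hα : 0 ≤ α) (hβ : 0 ≤ β) (hsum : α + β = 1)
    {x : EuclideanSpace ℝ (Fin n) × ℝ} (hx : x = α • C + β • l0)
    (hxσ : f x.1 - x.2 = σ) : x ∈ Shat f Γ σ mu := by
  obtain ⟨⟨hCΓ, hCσ⟩, hCd⟩ := hC
  obtain ⟨⟨hl0Γ, hl0σ⟩, hl0d⟩ := hl0
  rcases eq_or_lt_of_le hα with hα0 | hαpos
  · -- α = 0 : x = l0
    have hβ1 : β = 1 := by linarith
    have hxl : x = l0 := by rw [hx, ← hα0, hβ1]; module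
    rw [hxl]; exact ⟨⟨hl0Γ, hl0σ⟩, hl0d⟩
  rcases eq_or_lt_of_le hβ with hβ0 | hβpos
  · have hα1 : α = 1 := by linarith
    have hxl : x = C := by rw [hx, ← hβ0, hα1]; module
    rw [hxl]; exact ⟨⟨hCΓ, hCσ⟩, hCd⟩
  have hx1 : x.1 = α • C.1 + β • l0.1 := by rw [hx]; rfl
  have hx2 : x.2 = α * C.2 + β * l0.2 := by rw [hx]; rfl
  have hxΓ : x.1 ∈ Γ := by rw [hx1]; exact hΓcx hCΓ hl0Γ hα hβ hsum
  -- f̃ is constant σ on the segment from C to l0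
  have hconst : ∀ s ∈ Set.Icc (0:ℝ) 1,
      f (C.1 + s • (l0.1 - C.1)) - (C.2 + s * (l0.2 - C.2)) = σ := by
    intro s hs
    have hptΓ : C.1 + s • (l0.1 - C.1) ∈ Γ := by
      have h : (1 - s) • C.1 + s • l0.1 = C.1 + s • (l0.1 - C.1) := by module
      rw [← h]; exact hΓcx hCΓ hl0Γ (by linarith [hs.2]) hs.1 (by ring)
    have hge : σ ≤ f (C.1 + s • (l0.1 - C.1)) - (C.2 + s * (l0.2 - C.2)) := by
      have hcomb := hfcc.2 hCΓ hl0Γ (by linarith [hs.2] : (0:ℝ) ≤ 1 - s) hs.1 (by ring)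
      have h : (1 - s) • C.1 + s • l0.1 = C.1 + s • (l0.1 - C.1) := by module
      rw [h] at hcomb
      simp only [smul_eq_mul] at hcomb
      have e : (1 - s) * (f C.1 - C.2) + s * (f l0.1 - l0.2) = σ := by
        rw [hCσ, hl0σ]; ring
      nlinarith [hcomb, e]
    have hle : f (C.1 + s • (l0.1 - C.1)) - (C.2 + s * (l0.2 - C.2)) ≤ σ := by
      have hβeq : β = 1 - α := by linarith
      rcases le_total s β with hsβ | hβs
      · have hs1 : s < 1 := by linarith
        have h1s : (1:ℝ) - s ≠ 0 := by linarith
        obtain ⟨θ, hθdef⟩ : ∃ θ : ℝ, θ = α / (1 - s) := ⟨_, rfl⟩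
        have hθeq : θ * (1 - s) = α := by rw [hθdef]; field_simp
        have hθpos : 0 < θ := hθdef ▸ div_pos hαpos (by linarith)
        have hθ1 : θ ≤ 1 := by rw [hθdef, div_le_one (by linarith)]; linarith
        have hcomb := hfcc.2 hptΓ hl0Γ hθpos.le
          (show (0:ℝ) ≤ 1 - θ by linarith) (by ring)
        have h1 : θ • (C.1 + s • (l0.1 - C.1)) + (1 - θ) • l0.1 = x.1 := by
          rw [hx1, hβeq]
          match_scalars
          · linear_combination hθeq
          · linear_combination - hθeq
        rw [h1] at hcomb
        simp only [smul_eq_mul] at hcomb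
        have e1 : f x.1 = σ + x.2 := by linarith
        have e2 : x.2 = θ * (1 - s) * C.2 + (1 - θ * (1 - s)) * l0.2 := by
          rw [hx2, hβeq, hθeq]
        have e3 : θ * f l0.1 = θ * (σ + l0.2) := by
          have : f l0.1 = σ + l0.2 := by linarith
          rw [this]
        have hstep : θ * ((f (C.1 + s • (l0.1 - C.1)) - (C.2 + s * (l0.2 - C.2))) - σ) ≤ 0 := by
          nlinarith [hcomb, e1, e2, e3]
        have hstep' : θ * ((f (C.1 + s • (l0.1 - C.1)) - (C.2 + s * (l0.2 - C.2))) - σ)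
            ≤ θ * 0 := by rw [mul_zero]; exact hstep
        have := le_of_mul_le_mul_left hstep' hθpos
        linarith
      · have hspos : 0 < s := lt_of_lt_of_le hβpos hβs
        have hs0 : s ≠ 0 := ne_of_gt hspos
        obtain ⟨θ, hθdef⟩ : ∃ θ : ℝ, θ = β / s := ⟨_, rfl⟩
        have hθeq : θ * s = β := by rw [hθdef]; field_simp
        have hθpos : 0 < θ := hθdef ▸ div_pos hβpos hspos
        have hθ1 : θ ≤ 1 := by rw [hθdef, div_le_one hspos]; linarith
        have hcomb := hfcc.2 hptΓ hCΓ hθpos.le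
          (show (0:ℝ) ≤ 1 - θ by linarith) (by ring)
        have h1 : θ • (C.1 + s • (l0.1 - C.1)) + (1 - θ) • C.1 = x.1 := by
          rw [hx1, hβeq]
          match_scalars <;>
            first
            | linear_combination -hθeq - hβeq
            | linear_combination hθeq + hβeq
        rw [h1] at hcomb
        simp only [smul_eq_mul] at hcomb
        have e1 : f x.1 = σ + x.2 := by linarith
        have e2 : x.2 = (1 - θ * s) * C.2 + (θ * s) * l0.2 := by
          rw [hx2]; linear_combination (C.2 - l0.2) * hθeq + C.2 * hsum
        have e3 : θ * f C.1 = θ * (σ + C.2) := by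
          have : f C.1 = σ + C.2 := by linarith
          rw [this]
        have hstep : θ * ((f (C.1 + s • (l0.1 - C.1)) - (C.2 + s * (l0.2 - C.2))) - σ) ≤ 0 := by
          nlinarith [hcomb, e1, e2, e3]
        have hstep' : θ * ((f (C.1 + s • (l0.1 - C.1)) - (C.2 + s * (l0.2 - C.2))) - σ)
            ≤ θ * 0 := by rw [mul_zero]; exact hstep
        have := le_of_mul_le_mul_left hstep' hθpos
        linarith
    linarith
  have hDCl0 : Dn f C l0 = 0 := Dn_of_seg_const hΓo hfsm hl0Γ hconst
  have hflatx : Dn f x l0 = 0 := by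
    have hv1 : x.1 - l0.1 = α • (C.1 - l0.1) := by
      rw [hx1]
      match_scalars <;> linarith
    have hv2 : x.2 - l0.2 = α * (C.2 - l0.2) := by rw [hx2]; linear_combination l0.2 * hsum
    rw [Dn, hv1, hv2, map_smul, smul_eq_mul]
    have h := hDCl0; rw [Dn] at h
    nlinarith [h]
  have hDmul0 : Dn f mu l0 ≤ 0 := (dotNu_nonpos_iff f mu l0).1 hl0d
  have := Dn_le_of_touch hΓo hfsm hfcc hxΓ hl0Γ hxσ hl0σ hflatx (mu := mu)
  exact ⟨⟨hxΓ, hxσ⟩, (dotNu_nonpos_iff f mu x).2 (by linarith)⟩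
end Chord
set_option maxHeartbeats 1000000 in
theorem stmt_5
    {n : ℕ} (hn : 2 ≤ n) (Γ : Set (EuclideanSpace ℝ (Fin n)))
    (hΓo : IsOpen Γ) (hΓcx : Convex ℝ Γ)
    (hΓcone : ∀ l ∈ Γ, ∀ t : ℝ, 0 < t → t • l ∈ Γ)
    (hΓsym : ∀ (π : Equiv.Perm (Fin n)), ∀ l ∈ Γ,
      (WithLp.toLp 2 (fun i => l (π i)) : EuclideanSpace ℝ (Fin n)) ∈ Γ)
    (hΓn : {l : EuclideanSpace ℝ (Fin n) | ∀ i, 0 < l i} ⊆ Γ)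
    (f : EuclideanSpace ℝ (Fin n) → ℝ)
    (hfsm : ContDiffOn ℝ (⊤ : ℕ∞) f Γ)
    (hfsym : ∀ (π : Equiv.Perm (Fin n)), ∀ l ∈ Γ,
      f (WithLp.toLp 2 (fun i => l (π i))) = f l)
    (hfpos : ∀ l ∈ Γ, ∀ i, 0 < fpart f l i)
    (hfcc : ConcaveOn ℝ Γ f)
    (σ : ℝ) (mu : EuclideanSpace ℝ (Fin n) × ℝ) (hmu : mu ∈ Vsig f Γ σ) :
    BplusOf f Γ σ mu ⊆ Vsig f Γ σ ∧
    ∀ mu' ∈ BplusOf f Γ σ mu, BplusOf f Γ σ mu' ⊆ BplusOf f Γ σ mu := by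
  obtain ⟨⟨hmuΓ, hcomp⟩, hmuNot⟩ := hmu
  have hmuf : f mu.1 - mu.2 ≤ σ := by
    by_contra h
    push_neg at h
    exact hmuNot ⟨hmuΓ, h⟩
  constructor
  · -- part (a)
    intro x hx
    obtain ⟨hxΓ, hxf⟩ := mem_of_BplusOf hΓo hΓcx hfsm hfcc hmuΓ hmuf hx
    obtain ⟨l0, hl0, t, ht, rfl⟩ := hx
    have hsub := key_subset hΓo hΓcx hfsm hfcc hmuΓ hl0 ht
    refine ⟨⟨hxΓ, fun a => slice_compact_of_subset hΓo hfsm hsub hcomp a⟩, ?_⟩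
    intro hcon
    exact absurd hcon.2 (not_lt.2 hxf)
  · -- part (b)
    intro mu' hmu' x hx
    obtain ⟨hmu'Γ, hmu'f⟩ := mem_of_BplusOf hΓo hΓcx hfsm hfcc hmuΓ hmuf hmu'
    obtain ⟨hxΓ, hxf⟩ := mem_of_BplusOf hΓo hΓcx hfsm hfcc hmu'Γ hmu'f hx
    obtain ⟨l0, hl0, t, ht, rfl⟩ := hmu'
    obtain ⟨C, hC, s, hs, rfl⟩ := hx
    have hCmu : C ∈ Shat f Γ σ mu :=
      key_subset hΓo hΓcx hfsm hfcc hmuΓ hl0 ht hC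
    obtain ⟨⟨hCΓ, hCσ⟩, hCd⟩ := hCmu
    obtain ⟨⟨hl0Γ, hl0σ⟩, hl0d⟩ := hl0
    have hCmu' : C ∈ Shat f Γ σ mu := ⟨⟨hCΓ, hCσ⟩, hCd⟩
    have hl0mu : l0 ∈ Shat f Γ σ mu := ⟨⟨hl0Γ, hl0σ⟩, hl0d⟩
    have hβnn : 0 ≤ (1 - s) * t := mul_nonneg (by linarith [hs.2]) ht.1
    have hρnn : 0 ≤ s + (1 - s) * t := by linarith [hs.1]
    have hρle : s + (1 - s) * t ≤ 1 := by nlinarith [hs.1, hs.2, ht.1, ht.2]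
    set x : EuclideanSpace ℝ (Fin n) × ℝ := s • C + (1 - s) • (t • l0 + (1 - t) • mu)
      with hxdef
    have hx1 : x.1 = s • C.1 + (1 - s) • (t • l0.1 + (1 - t) • mu.1) := rfl
    have hx2 : x.2 = s * C.2 + (1 - s) * (t * l0.2 + (1 - t) * mu.2) := rfl
    rcases eq_or_lt_of_le hρnn with hρ0 | hρpos
    · -- ρ = 0 : x = mu
      have hs0 : s = 0 := by nlinarith [hs.1]
      subst hs0
      have ht0 : t = 0 := by nlinarith
      subst ht0
      exact ⟨C, hCmu', 0, ⟨le_refl 0, zero_le_one⟩, by module⟩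
    rcases eq_or_lt_of_le hρle with hρ1 | hρlt
    · -- ρ = 1 : x is on the chord between C and l0
      have hxeq : x = s • C + ((1 - s) * t) • l0 := by
        rw [hxdef]
        have h0 : (1 - s) * (1 - t) = 0 := by nlinarith
        match_scalars
        · ring
        · ring
        · linear_combination h0
      have hxσ : f x.1 - x.2 = σ := by
        refine le_antisymm hxf ?_
        have hx1' : x.1 = s • C.1 + ((1 - s) * t) • l0.1 := by rw [hxeq]; rfl
        have hx2' : x.2 = s * C.2 + ((1 - s) * t) * l0.2 := by rw [hxeq]; rfl
        have hcomb := hfcc.2 hCΓ hl0Γ hs.1 hβnn hρ1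
        rw [← hx1'] at hcomb
        simp only [smul_eq_mul] at hcomb
        have eC : s * (f C.1 - C.2) = s * σ := by rw [hCσ]
        have el : ((1 - s) * t) * (f l0.1 - l0.2) = ((1 - s) * t) * σ := by rw [hl0σ]
        have es : s * σ + ((1 - s) * t) * σ = σ := by linear_combination σ * hρ1
        rw [hx2']
        nlinarith [hcomb, eC, el, es]
      have hxShat : x ∈ Shat f Γ σ mu :=
        shat_chord hΓo hΓcx hfsm hfcc hCmu' hl0mu hs.1 hβnn hρ1 hxeq hxσ
      exact ⟨x, hxShat, 1, ⟨zero_le_one, le_refl 1⟩, by module⟩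
    · -- 0 < ρ < 1
      have hρne : s + (1 - s) * t ≠ 0 := ne_of_gt hρpos
      set ρ : ℝ := s + (1 - s) * t with hρdef
      have hrs1 : 1 < ρ⁻¹ := one_lt_inv_iff₀.2 ⟨hρpos, hρlt⟩
      set z : EuclideanSpace ℝ (Fin n) × ℝ := mu + ρ⁻¹ • (x - mu) with hzdef
      have hz1 : z.1 = mu.1 + ρ⁻¹ • (x.1 - mu.1) := rfl
      have hz2 : z.2 = mu.2 + ρ⁻¹ * (x.2 - mu.2) := rfl
      have hzc1 : z.1 = (s / ρ) • C.1 + ((1 - s) * t / ρ) • l0.1 := by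
        rw [hz1, hx1]
        match_scalars <;> field_simp <;> ring
      have hzc2 : z.2 = (s / ρ) * C.2 + ((1 - s) * t / ρ) * l0.2 := by
        rw [hz2, hx2]
        field_simp
        ring
      have hw1 : 0 ≤ s / ρ := div_nonneg hs.1 hρpos.le
      have hw2 : 0 ≤ (1 - s) * t / ρ := div_nonneg hβnn hρpos.le
      have hwsum : s / ρ + (1 - s) * t / ρ = 1 := by field_simp; exact hρdef.symm
      have hzΓ : z.1 ∈ Γ := by
        rw [hzc1]
        exact hΓcx hCΓ hl0Γ hw1 hw2 hwsum
      have hzσ : σ ≤ f z.1 - z.2 := by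
        have hcomb := hfcc.2 hCΓ hl0Γ hw1 hw2 hwsum
        rw [← hzc1] at hcomb
        simp only [smul_eq_mul] at hcomb
        have eC : (s / ρ) * (f C.1 - C.2) = (s / ρ) * σ := by rw [hCσ]
        have el : ((1 - s) * t / ρ) * (f l0.1 - l0.2) = ((1 - s) * t / ρ) * σ := by
          rw [hl0σ]
        have es : (s / ρ) * σ + ((1 - s) * t / ρ) * σ = σ := by
          linear_combination σ * hwsum
        rw [hzc2]
        nlinarith [hcomb, eC, el, es]
      -- the ray r ↦ mu + r • (x - mu)
      set h : ℝ → ℝ := fun r => f (mu.1 + r • (x.1 - mu.1)) - (mu.2 + r * (x.2 - mu.2))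
        with hhdef
      have hhz : h ρ⁻¹ = f z.1 - z.2 := rfl
      have hhx : h 1 = f x.1 - x.2 := by
        have e : mu.1 + (1:ℝ) • (x.1 - mu.1) = x.1 := by module
        simp only [hhdef, e]
        ring
      have hPmem : ∀ r : ℝ, 0 ≤ r → r ≤ ρ⁻¹ → mu.1 + r • (x.1 - mu.1) ∈ Γ := by
        intro r h0 h1
        have he : mu.1 + r • (x.1 - mu.1) = (1 - r * ρ) • mu.1 + (r * ρ) • z.1 := by
          rw [hz1]
          match_scalars <;> field_simp <;> ring
        rw [he]
        have hrρ1 : r * ρ ≤ 1 := by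
          rw [← inv_mul_cancel₀ hρne]
          exact mul_le_mul_of_nonneg_right h1 hρpos.le
        exact hΓcx hmuΓ hzΓ (by linarith) (mul_nonneg h0 hρpos.le) (by ring)
      have hlineC : Continuous (fun r : ℝ => mu.1 + r • (x.1 - mu.1)) :=
        continuous_const.add (continuous_id.smul continuous_const)
      have hcontAt : ∀ r : ℝ, mu.1 + r • (x.1 - mu.1) ∈ Γ → ContinuousAt h r := by
        intro r hr
        have h1 : ContinuousAt (fun r : ℝ => f (mu.1 + r • (x.1 - mu.1))) r :=
          ContinuousAt.comp (x := r) (g := f)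
            (hfsm.continuousOn.continuousAt (hΓo.mem_nhds hr)) hlineC.continuousAt
        exact h1.sub
          (continuous_const.add (continuous_id.mul continuous_const)).continuousAt
      -- the first boundary hitting time r₁
      set T : Set ℝ := {r : ℝ | r ∈ Set.Icc 1 ρ⁻¹ ∧ σ ≤ h r} with hTdef
      have hTmem : ρ⁻¹ ∈ T := ⟨⟨hrs1.le, le_refl _⟩, by rw [hhz]; exact hzσ⟩
      have hTne : T.Nonempty := ⟨ρ⁻¹, hTmem⟩
      have hTbdd : BddBelow T := ⟨1, fun r hr => hr.1.1⟩
      set r₁ : ℝ := sInf T with hr₁def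
      have hr₁ge : 1 ≤ r₁ := le_csInf hTne (fun r hr => hr.1.1)
      have hr₁le : r₁ ≤ ρ⁻¹ := csInf_le hTbdd hTmem
      have hr₁Γ : mu.1 + r₁ • (x.1 - mu.1) ∈ Γ := hPmem r₁ (by linarith) hr₁le
      have hr₁T : σ ≤ h r₁ := by
        have hcl : r₁ ∈ closure T := csInf_mem_closure hTne hTbdd
        have hcA : ContinuousAt h r₁ := hcontAt r₁ hr₁Γ
        have himg : h r₁ ∈ closure (h '' T) := mem_closure_image hcA hcl
        have hsubI : h '' T ⊆ Set.Ici σ := by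
          rintro y ⟨r, hr, rfl⟩
          exact hr.2
        have := (closure_mono hsubI) himg
        rwa [closure_Ici] at this
      have hlow : ∀ r : ℝ, 1 ≤ r → r < r₁ → h r < σ := by
        intro r hr1 hrr₁
        by_contra hcon
        push_neg at hcon
        have : r ∈ T := ⟨⟨hr1, by linarith⟩, hcon⟩
        exact absurd (csInf_le hTbdd this) (not_le.2 hrr₁)
      have hhr₁ : h r₁ = σ := by
        refine le_antisymm ?_ hr₁T
        rcases eq_or_lt_of_le hr₁ge with h1r | h1r
        · rw [← h1r, hhx]; exact hxf
        · have hcA : ContinuousAt h r₁ := hcontAt r₁ hr₁Γ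
          have htend : Filter.Tendsto h (nhdsWithin r₁ (Set.Iio r₁)) (nhds (h r₁)) :=
            hcA.continuousWithinAt.tendsto
          refine le_of_tendsto htend ?_
          have hIco : Set.Ico 1 r₁ ∈ nhdsWithin r₁ (Set.Iio r₁) :=
            Ico_mem_nhdsLT_of_mem ⟨h1r, le_refl _⟩
          filter_upwards [hIco] with r hr
          exact (hlow r hr.1 hr.2).le
      -- the boundary point lam
      set lam : EuclideanSpace ℝ (Fin n) × ℝ :=
        (mu.1 + r₁ • (x.1 - mu.1), mu.2 + r₁ * (x.2 - mu.2)) with hlamdef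
      have hlam1 : lam.1 = mu.1 + r₁ • (x.1 - mu.1) := rfl
      have hlam2 : lam.2 = mu.2 + r₁ * (x.2 - mu.2) := rfl
      have hlamσ : f lam.1 - lam.2 = σ := hhr₁
      set m : ℝ := fderiv ℝ f lam.1 (x.1 - mu.1) - (x.2 - mu.2) with hmdef
      have hm : 0 ≤ m := by
        rcases eq_or_lt_of_le hr₁le with hr₁eq | hr₁lt
        · -- r₁ = ρ⁻¹ : left slope argument
          have hd : HasDerivAt h m r₁ := by
            have h1 := line_hasDerivAt hΓo hfsm mu.1 (x.1 - mu.1) r₁ hr₁Γ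
            have h2 : HasDerivAt (fun r : ℝ => mu.2 + r * (x.2 - mu.2)) (x.2 - mu.2) r₁ := by
              simpa using ((hasDerivAt_id r₁).mul_const (x.2 - mu.2)).const_add mu.2
            exact h1.sub h2
          refine slope_left_nonneg hd ?_
          have h1r : 1 < r₁ := by rw [hr₁eq]; exact hrs1
          have hIco : Set.Ico 1 r₁ ∈ nhdsWithin r₁ (Set.Iio r₁) :=
            Ico_mem_nhdsLT_of_mem ⟨h1r, le_refl _⟩
          filter_upwards [hIco] with r hr
          rw [hhr₁]
          exact (hlow r hr.1 hr.2).le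
        · -- r₁ < ρ⁻¹ : tangent bound towards z
          have htan := tangent_Dn hΓo hfsm hfcc (lp := lam) (nu := z) hr₁Γ hzΓ
          have hv1 : z.1 - lam.1 = (ρ⁻¹ - r₁) • (x.1 - mu.1) := by
            rw [hz1, hlam1]; module
          have hv2 : z.2 - lam.2 = (ρ⁻¹ - r₁) * (x.2 - mu.2) := by
            rw [hz2, hlam2]; ring
          have hDzlam : Dn f z lam = (ρ⁻¹ - r₁) * m := by
            rw [Dn, hv1, hv2, map_smul, smul_eq_mul, hmdef]; ring
          rw [hDzlam, hlamσ] at htan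
          nlinarith [htan, hzσ, sub_pos.2 hr₁lt]
      have hDn : Dn f mu lam ≤ 0 := by
        have hv1 : mu.1 - lam.1 = (-r₁) • (x.1 - mu.1) := by rw [hlam1]; module
        have hv2 : mu.2 - lam.2 = (-r₁) * (x.2 - mu.2) := by rw [hlam2]; ring
        have : Dn f mu lam = (-r₁) * m := by
          rw [Dn, hv1, hv2, map_smul, smul_eq_mul, hmdef]; ring
        rw [this]
        nlinarith [hm, hr₁ge]
      have hlamShat : lam ∈ Shat f Γ σ mu :=
        ⟨⟨hr₁Γ, hlamσ⟩, (dotNu_nonpos_iff f mu lam).2 hDn⟩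
      have hr₁pos : 0 < r₁ := by linarith
      have hr₁ne : r₁ ≠ 0 := ne_of_gt hr₁pos
      refine ⟨lam, hlamShat, r₁⁻¹,
        ⟨inv_nonneg.2 hr₁pos.le, inv_le_one_of_one_le₀ hr₁ge⟩, ?_⟩
      have e1 : x.1 = r₁⁻¹ • lam.1 + (1 - r₁⁻¹) • mu.1 := by
        rw [hlam1]
        match_scalars <;> (field_simp; try ring)
      have e2 : x.2 = r₁⁻¹ * lam.2 + (1 - r₁⁻¹) * mu.2 := by
        rw [hlam2]
        field_simp
        ring
      have : (r₁⁻¹ • lam + (1 - r₁⁻¹) • mu).1 = r₁⁻¹ • lam.1 + (1 - r₁⁻¹) • mu.1 := rfl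
      apply Prod.ext
      · rw [this, ← e1]
      · show x.2 = r₁⁻¹ * lam.2 + (1 - r₁⁻¹) * mu.2
        exact e2
end

section
/- Let λ ∈ Γ with λ ≠ 0. Then |λ| Σ_{i=1}^n f_i(λ) ≥ f(|λ|·𝟏) − f(λ) + Σ_{i=1}^n f_i(λ)λ_i, and furthermore |λ| Σ_{i=1}^n f_i(λ) ≥ f(|λ|·𝟏) − f(λ) − (1/(4|λ|)) Σ_{i=1}^n f_i(λ)λ_i² − |λ| Σ_{i=1}^n f_i(λ). -/
open scoped BigOperators
open Set

lemma euclid_decomp {n : ℕ} (v : EuclideanSpace ℝ (Fin n)) :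
    v = ∑ i, v i • EuclideanSpace.single i (1 : ℝ) := by
  ext j
  rw [show (∑ i, v i • EuclideanSpace.single i (1:ℝ)) j
      = ∑ i, (v i • EuclideanSpace.single i (1:ℝ)) j from by rw [WithLp.ofLp_sum, Finset.sum_apply]]
  simp [EuclideanSpace.single_apply]

lemma fderiv_eq_sum {n : ℕ} (f : EuclideanSpace ℝ (Fin n) → ℝ)
    (x v : EuclideanSpace ℝ (Fin n)) :
    fderiv ℝ f x v = ∑ i, fderiv ℝ f x (EuclideanSpace.single i (1:ℝ)) * v i := by
  conv_lhs => rw [euclid_decomp v]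
  rw [map_sum]
  simp [mul_comm]

lemma concave_tangent {n : ℕ} {Γ : Set (EuclideanSpace ℝ (Fin n))}
    (hΓcx : Convex ℝ Γ) {f : EuclideanSpace ℝ (Fin n) → ℝ}
    (hfcc : ConcaveOn ℝ Γ f) {x y : EuclideanSpace ℝ (Fin n)}
    (hx : x ∈ Γ) (hy : y ∈ Γ) (hfd : DifferentiableAt ℝ f x) :
    f y ≤ f x + fderiv ℝ f x (y - x) := by
  set g : ℝ → ℝ := (f ∘ (AffineMap.lineMap x y : ℝ →ᵃ[ℝ] EuclideanSpace ℝ (Fin n))) with hg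
  have hgc : ConcaveOn ℝ (Icc (0:ℝ) 1) g := by
    refine (hfcc.comp_affineMap _).subset ?_ (convex_Icc 0 1)
    intro t ht
    simp only [mem_preimage, AffineMap.lineMap_apply_module]
    exact hΓcx hx hy (by linarith [ht.1, ht.2]) ht.1 (by ring)
  have hinner : HasDerivAt (fun t : ℝ => (AffineMap.lineMap x y : ℝ →ᵃ[ℝ] _) t) (y - x) 0 := by
    have h1 : HasDerivAt (fun t : ℝ => t • (y - x) + x) (y - x) 0 := by
      simpa using ((hasDerivAt_id (0:ℝ)).smul_const (y - x)).add_const x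
    simpa [AffineMap.lineMap_apply_module'] using h1
  have hg' : HasDerivAt g (fderiv ℝ f x (y - x)) 0 := by
    have hx0 : (AffineMap.lineMap x y : ℝ →ᵃ[ℝ] _) (0:ℝ) = x := by
      simp
    have hfd' : HasFDerivAt f (fderiv ℝ f x) ((AffineMap.lineMap x y : ℝ →ᵃ[ℝ] _) (0:ℝ)) := by
      rw [hx0]; exact hfd.hasFDerivAt
    exact hfd'.comp_hasDerivAt 0 hinner
  have := hgc.slope_le_of_hasDerivAt (left_mem_Icc.2 zero_le_one)
    (right_mem_Icc.2 zero_le_one) zero_lt_one hg'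
  have hs : slope g 0 1 = f y - f x := by
    simp [slope_def_field, hg, Function.comp]
  rw [hs] at this
  linarith

theorem stmt_17
    {n : ℕ} (hn : 2 ≤ n) (Γ : Set (EuclideanSpace ℝ (Fin n)))
    (hΓo : IsOpen Γ) (hΓcx : Convex ℝ Γ)
    (hΓcone : ∀ l ∈ Γ, ∀ t : ℝ, 0 < t → t • l ∈ Γ)
    (hΓsym : ∀ (π : Equiv.Perm (Fin n)), ∀ l ∈ Γ,
      (WithLp.toLp 2 (fun i => l (π i)) : EuclideanSpace ℝ (Fin n)) ∈ Γ)
    (hΓn : {l : EuclideanSpace ℝ (Fin n) | ∀ i, 0 < l i} ⊆ Γ)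
    (f : EuclideanSpace ℝ (Fin n) → ℝ)
    (hfsm : ContDiffOn ℝ (⊤ : ℕ∞) f Γ)
    (hfsym : ∀ (π : Equiv.Perm (Fin n)), ∀ l ∈ Γ,
      f (WithLp.toLp 2 (fun i => l (π i))) = f l)
    (hfpos : ∀ l ∈ Γ, ∀ i, 0 < fpart f l i)
    (hfcc : ConcaveOn ℝ Γ f)
    (l : EuclideanSpace ℝ (Fin n)) (hl : l ∈ Γ) (hl0 : l ≠ 0) :
    ‖l‖ * ∑ i, fpart f l i ≥ f (WithLp.toLp 2 (fun _ => ‖l‖)) - f l + ∑ i, fpart f l i * l i ∧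
    ‖l‖ * ∑ i, fpart f l i ≥ f (WithLp.toLp 2 (fun _ => ‖l‖)) - f l -
      (1 / (4 * ‖l‖)) * ∑ i, fpart f l i * l i ^ 2 - ‖l‖ * ∑ i, fpart f l i := by
  have hr : (0:ℝ) < ‖l‖ := norm_pos_iff.2 hl0
  set r := ‖l‖ with hrdef
  set m : EuclideanSpace ℝ (Fin n) := WithLp.toLp 2 (fun _ => r) with hmdef
  have hm : m ∈ Γ := hΓn (fun i => hr)
  have hd : DifferentiableAt ℝ f l :=
    (hfsm.contDiffAt (hΓo.mem_nhds hl)).differentiableAt (by simp)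
  have h1 := concave_tangent hΓcx hfcc hl hm hd
  have hD : fderiv ℝ f l (m - l) = r * ∑ i, fpart f l i - ∑ i, fpart f l i * l i := by
    rw [fderiv_eq_sum, Finset.mul_sum, ← Finset.sum_sub_distrib]
    apply Finset.sum_congr rfl
    intro i _
    have hmi : (m - l) i = r - l i := by
      simp [hmdef]
    rw [hmi, fpart]
    ring
  rw [hD] at h1
  have hfirst : r * ∑ i, fpart f l i ≥ f m - f l + ∑ i, fpart f l i * l i := by
    linarith
  refine ⟨hfirst, ?_⟩
  have hkey : 0 ≤ (1 / (4 * r)) * ∑ i, fpart f l i * l i ^ 2 +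
      ∑ i, fpart f l i * l i + r * ∑ i, fpart f l i := by
    have heq : (1 / (4 * r)) * ∑ i, fpart f l i * l i ^ 2 +
        ∑ i, fpart f l i * l i + r * ∑ i, fpart f l i =
        ∑ i, ((1 / (4 * r)) * (fpart f l i * l i ^ 2) +
          fpart f l i * l i + r * fpart f l i) := by
      rw [Finset.sum_add_distrib, Finset.sum_add_distrib, Finset.mul_sum, Finset.mul_sum]
    rw [heq]
    apply Finset.sum_nonneg
    intro i _
    have hfi := hfpos l hl i
    have hterm : (1 / (4 * r)) * (fpart f l i * l i ^ 2) +
        fpart f l i * l i + r * fpart f l i =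
        (fpart f l i / (4 * r)) * (l i + 2 * r) ^ 2 := by
      field_simp
      ring
    rw [hterm]
    exact mul_nonneg (div_nonneg hfi.le (by linarith)) (sq_nonneg _)
  linarith
end

section
/- Let β ∈ (0, 1) and b > 0. Then there exist constants c₀ > 0 and C₀ > 0, depending only on n, β and b, such that for every λ ∈ Γ satisfying: (i) Σ_{i=1}^n λ_i ≥ 0, (ii) f_i(λ) ≥ (β/√n) Σ_{k=1}^n f_k(λ) for every i, and (iii) Σ_{i=1}^n f_i(λ)(b − λ_i) ≥ 0, and for every index r ∈ {1,…,n}, one has Σ_{i ≠ r} f_i(λ)λ_i² ≥ c₀ Σ_{i=1}^n f_i(λ)λ_i² − C₀ Σ_{i=1}^n f_i(λ). -/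
open scoped BigOperators
open Set

theorem stmt_19
    {n : ℕ} (hn : 2 ≤ n) (Γ : Set (EuclideanSpace ℝ (Fin n)))
    (hΓo : IsOpen Γ) (hΓcx : Convex ℝ Γ)
    (hΓcone : ∀ l ∈ Γ, ∀ t : ℝ, 0 < t → t • l ∈ Γ)
    (hΓsym : ∀ (π : Equiv.Perm (Fin n)), ∀ l ∈ Γ,
      (WithLp.toLp 2 (fun i => l (π i)) : EuclideanSpace ℝ (Fin n)) ∈ Γ)
    (hΓn : {l : EuclideanSpace ℝ (Fin n) | ∀ i, 0 < l i} ⊆ Γ)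
    (f : EuclideanSpace ℝ (Fin n) → ℝ)
    (hfsm : ContDiffOn ℝ (⊤ : ℕ∞) f Γ)
    (hfsym : ∀ (π : Equiv.Perm (Fin n)), ∀ l ∈ Γ,
      f (WithLp.toLp 2 (fun i => l (π i))) = f l)
    (hfpos : ∀ l ∈ Γ, ∀ i, 0 < fpart f l i)
    (hfcc : ConcaveOn ℝ Γ f)
    (β : ℝ) (hβ : β ∈ Set.Ioo (0:ℝ) 1) (b : ℝ) (hb : 0 < b) :
    ∃ c₀ > (0:ℝ), ∃ C₀ > (0:ℝ), ∀ l ∈ Γ,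
      0 ≤ ∑ i, l i →
      (∀ i, fpart f l i ≥ (β / Real.sqrt n) * ∑ k, fpart f l k) →
      0 ≤ ∑ i, fpart f l i * (b - l i) →
      ∀ r : Fin n,
        ∑ i ∈ Finset.univ.erase r, fpart f l i * l i ^ 2 ≥
          c₀ * ∑ i, fpart f l i * l i ^ 2 - C₀ * ∑ i, fpart f l i := by
  have hn2 : (2:ℝ) ≤ (n:ℝ) := by exact_mod_cast hn
  have hn0 : (0:ℝ) < (n:ℝ) := by linarith
  have hsq : (0:ℝ) < Real.sqrt n := Real.sqrt_pos.2 hn0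
  set c : ℝ := β / Real.sqrt n with hc
  have hc0 : 0 < c := div_pos hβ.1 hsq
  set M : ℝ := 2 * (n:ℝ)^2 / c with hM
  have hM0 : 0 < M := div_pos (by positivity) hc0
  set C' : ℝ := 2 * b^2 / c^2 with hC'
  have hC'0 : 0 < C' := div_pos (by positivity) (by positivity)
  clear_value M C'
  have h1M : (0:ℝ) < 1 + M := by linarith
  have hcM : c * M = 2*(n:ℝ)^2 := by rw [hM]; field_simp
  refine ⟨1/(1+M), div_pos one_pos h1M, C'/(1+M), div_pos hC'0 h1M, ?_⟩
  intro l hl hsum hgrad hbsum r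
  set F : Fin n → ℝ := fpart f l with hF
  have hFpos : ∀ i, 0 < F i := by intro i; rw [hF]; exact hfpos l hl i
  have hcS : ∀ i, c * (∑ k, F k) ≤ F i := fun i => hgrad i
  set S : ℝ := ∑ i, F i with hS
  have hS0 : 0 < S := Finset.sum_pos (fun i _ => hFpos i) ⟨r, Finset.mem_univ r⟩
  have hFS : ∀ i, F i ≤ S := fun i =>
    Finset.single_le_sum (fun j _ => (hFpos j).le) (Finset.mem_univ i)
  set Q : ℝ := ∑ i ∈ Finset.univ.erase r, F i * l i ^ 2 with hQ
  clear_value F S Q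
  have hQ0 : 0 ≤ Q := by
    rw [hQ]; exact Finset.sum_nonneg fun i _ => mul_nonneg (hFpos i).le (sq_nonneg _)
  have hT : ∑ i, F i * l i ^ 2 = F r * l r ^ 2 + Q := by
    rw [hQ]; exact (Finset.add_sum_erase _ _ (Finset.mem_univ r)).symm
  have key : F r * l r ^ 2 ≤ M * Q + C' * S := by
    rcases le_or_gt (l r) 0 with hlr | hlr
    · -- case l r ≤ 0
      have hne : (Finset.univ.erase r).Nonempty := by
        rw [← Finset.card_pos, Finset.card_erase_of_mem (Finset.mem_univ r),
          Finset.card_univ, Fintype.card_fin]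
        omega
      have hn1 : (0:ℝ) < (n:ℝ) - 1 := by linarith
      have hsum_e : -l r ≤ ∑ i ∈ Finset.univ.erase r, l i := by
        have h := Finset.add_sum_erase Finset.univ l (Finset.mem_univ r)
        linarith [hsum]
      have hconst : ∑ _i ∈ Finset.univ.erase r, (-l r)/((n:ℝ)-1) = -l r := by
        rw [Finset.sum_const, Finset.card_erase_of_mem (Finset.mem_univ r),
          Finset.card_univ, Fintype.card_fin, nsmul_eq_mul]
        have hcast : ((n - 1 : ℕ) : ℝ) = (n:ℝ) - 1 := by
          rw [Nat.cast_sub (by omega : 1 ≤ n), Nat.cast_one]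
        rw [hcast]
        field_simp
      obtain ⟨i, hi, hli⟩ := Finset.exists_le_of_sum_le hne
        (by rw [hconst]; exact hsum_e :
          ∑ _i ∈ Finset.univ.erase r, (-l r)/((n:ℝ)-1) ≤ ∑ i ∈ Finset.univ.erase r, l i)
      have hli' : -l r ≤ ((n:ℝ)-1) * l i := by
        rw [div_le_iff₀ hn1] at hli; linarith [hli]
      have hsq1 : (-l r) * (-l r) ≤ (((n:ℝ)-1) * l i) * (((n:ℝ)-1) * l i) :=
        mul_self_le_mul_self (by linarith) hli'
      have h2Q : F i * l i ^ 2 ≤ Q := by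
        rw [hQ]
        exact Finset.single_le_sum (fun j _ => mul_nonneg (hFpos j).le (sq_nonneg _)) hi
      have eA : c * (S * l r ^ 2) ≤ ((n:ℝ)-1)^2 * (F i * l i ^ 2) := by
        have k1 : (c * S) * (l r ^ 2) ≤ (c * S) * (((n:ℝ)-1)^2 * l i ^ 2) := by
          apply mul_le_mul_of_nonneg_left _ (mul_pos hc0 hS0).le
          linarith [hsq1]
        have k2 : (c * S) * (((n:ℝ)-1)^2 * l i ^ 2) ≤ F i * (((n:ℝ)-1)^2 * l i ^ 2) :=
          mul_le_mul_of_nonneg_right (hcS i) (by positivity)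
        linarith [k1, k2]
      have eB : ((n:ℝ)-1)^2 * (F i * l i ^ 2) ≤ ((n:ℝ)-1)^2 * Q :=
        mul_le_mul_of_nonneg_left h2Q (by positivity)
      have eC : ((n:ℝ)-1)^2 * Q ≤ (c*M) * Q :=
        mul_le_mul_of_nonneg_right (by rw [hcM]; nlinarith [hn2]) hQ0
      have e0 : c * (F r * l r ^ 2) ≤ c * (S * l r ^ 2) := by
        apply mul_le_mul_of_nonneg_left _ hc0.le
        exact mul_le_mul_of_nonneg_right (hFS r) (sq_nonneg _)
      have eD : 0 ≤ c * (C' * S) := by positivity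
      have efin : c * (F r * l r ^ 2) ≤ c * (M * Q + C' * S) := by
        linarith [e0, eA, eB, eC, eD]
      exact le_of_mul_le_mul_left efin hc0
    · -- case l r > 0
      have hFl : ∑ i, F i * l i ≤ b * S := by
        have hexp : ∑ i, F i * (b - l i) = b * S - ∑ i, F i * l i := by
          rw [hS, Finset.mul_sum, ← Finset.sum_sub_distrib]
          exact Finset.sum_congr rfl fun i _ => by ring
        linarith [hbsum, hexp]
      have pa : F r * l r + ∑ i ∈ Finset.univ.erase r, F i * l i ≤ b * S := by
        have h := Finset.add_sum_erase Finset.univ (fun i => F i * l i) (Finset.mem_univ r)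
        simp only at h
        linarith [hFl, h]
      have term : ∀ i ∈ Finset.univ.erase r,
          4*(n:ℝ)*c*(-(F i * l i * l r)) ≤ c^2*(F i * l r ^ 2) + 4*(n:ℝ)^2*(F i * l i ^ 2) := by
        intro i _
        linarith [mul_nonneg (hFpos i).le (sq_nonneg (c * l r + 2*(n:ℝ)*l i))]
      have hsum2 := Finset.sum_le_sum term
      have hLeq : ∑ i ∈ Finset.univ.erase r, (4*(n:ℝ)*c*(-(F i * l i * l r)))
          = 4*(n:ℝ)*c*(-l r) * ∑ i ∈ Finset.univ.erase r, F i * l i := by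
        rw [Finset.mul_sum]; exact Finset.sum_congr rfl fun i _ => by ring
      have hReq : ∑ i ∈ Finset.univ.erase r, (c^2*(F i * l r ^ 2) + 4*(n:ℝ)^2*(F i * l i ^ 2))
          = c^2 * l r ^ 2 * (∑ i ∈ Finset.univ.erase r, F i) + 4*(n:ℝ)^2 * Q := by
        have hA : ∑ i ∈ Finset.univ.erase r, c^2*(F i * l r ^ 2)
            = c^2 * l r ^ 2 * (∑ i ∈ Finset.univ.erase r, F i) := by
          rw [Finset.mul_sum]; exact Finset.sum_congr rfl fun i _ => by ring
        have hB : ∑ i ∈ Finset.univ.erase r, 4*(n:ℝ)^2*(F i * l i ^ 2)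
            = 4*(n:ℝ)^2 * Q := by
          rw [hQ, Finset.mul_sum]
        rw [Finset.sum_add_distrib, hA, hB]
      rw [hLeq, hReq] at hsum2
      set T := ∑ i ∈ Finset.univ.erase r, F i * l i with hTd
      set Se := ∑ i ∈ Finset.univ.erase r, F i with hSed
      clear_value T Se
      have hSe : Se ≤ S := by
        rw [hSed, hS]
        exact Finset.sum_le_sum_of_subset_of_nonneg (Finset.erase_subset _ _)
          fun j _ _ => (hFpos j).le
      have pa' : (4*(n:ℝ)*c^2*l r) * (F r * l r + T) ≤ (4*(n:ℝ)*c^2*l r) * (b*S) :=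
        mul_le_mul_of_nonneg_left pa (mul_nonneg (by positivity) hlr.le)
      have hb2' : c * (4*(n:ℝ)*c*(-l r) * T) ≤ c * (c^2 * l r ^ 2 * Se + 4*(n:ℝ)^2 * Q) :=
        mul_le_mul_of_nonneg_left hsum2 hc0.le
      have p3a : (c^3 * l r ^ 2) * Se ≤ (c^3 * l r ^ 2) * S :=
        mul_le_mul_of_nonneg_left hSe (by positivity)
      have p3b : (c^2 * l r ^ 2) * (c * S) ≤ (c^2 * l r ^ 2) * (F r) :=
        mul_le_mul_of_nonneg_left (hcS r) (by positivity)
      have p4' : (4*(n:ℝ)*b*c*l r) * (c * S) ≤ (4*(n:ℝ)*b*c*l r) * (F r) :=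
        mul_le_mul_of_nonneg_left (hcS r) (mul_nonneg (by positivity) hlr.le)
      have p5 : 4*b*c*l r ≤ c^2 * l r ^ 2 + 4*b^2 := by
        linarith [sq_nonneg (c * l r - 2*b)]
      have p5' : ((n:ℝ) * F r) * (4*b*c*l r) ≤ ((n:ℝ) * F r) * (c^2 * l r ^ 2 + 4*b^2) :=
        mul_le_mul_of_nonneg_left p5 (mul_nonneg hn0.le (hFpos r).le)
      have hfin : (3*(n:ℝ) - 1) * (c^2*(F r * l r ^ 2))
          ≤ 4*(n:ℝ)*b^2*(F r) + 4*(n:ℝ)^2*c*Q := by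
        linarith [pa', hb2', p3a, p3b, p4', p5']
      have q1 : 0 ≤ ((n:ℝ)-1) * (c^2*(F r * l r ^ 2)) :=
        mul_nonneg (by linarith)
          (mul_nonneg (by positivity) (mul_nonneg (hFpos r).le (sq_nonneg _)))
      have q2 : (4*(n:ℝ)*b^2) * (F r) ≤ (4*(n:ℝ)*b^2) * S :=
        mul_le_mul_of_nonneg_left (hFS r) (by positivity)
      have q3 : 0 ≤ ((n:ℝ)^2*((n:ℝ)-1)) * (c*Q) :=
        mul_nonneg (mul_nonneg (sq_nonneg _) (by linarith)) (mul_nonneg hc0.le hQ0)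
      have G2 : (2*(n:ℝ)) * (c^2*(F r * l r ^ 2))
          ≤ (2*(n:ℝ)) * (2*b^2*S + 2*(n:ℝ)^2*c*Q) := by
        linarith [hfin, q1, q2, q3]
      have G1 : c^2*(F r * l r ^ 2) ≤ 2*b^2*S + 2*(n:ℝ)^2*c*Q :=
        le_of_mul_le_mul_left G2 (by linarith : (0:ℝ) < 2*(n:ℝ))
      have hcC : C' * c^2 = 2*b^2 := by rw [hC']; field_simp
      have hM1 : c^2 * (M * Q + C' * S) = 2*b^2*S + 2*(n:ℝ)^2*c*Q := by
        linear_combination (c*Q) * hcM + S * hcC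
      have hfin2 : c^2 * (F r * l r ^ 2) ≤ c^2 * (M * Q + C' * S) := by
        rw [hM1]; exact G1
      exact le_of_mul_le_mul_left hfin2 (pow_pos hc0 2)
  rw [ge_iff_le, hT]
  have heq : 1/(1+M) * (F r * l r ^ 2 + Q) - C'/(1+M) * S
      = ((F r * l r ^ 2 + Q) - C' * S)/(1+M) := by ring
  rw [heq, div_le_iff₀ h1M]
  linarith [key, hQ0]
end
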